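/- The vector field W₇ = z₂^{m−1}∂ₓ + ((m−1)/(2m−1))z₂^{2m−1}∂_y + (z₁z₂^{m−1} − y/m)∂_z + (1 − 1/m)z₂^m ∂_{z₁} (for m ≠ 0, 1/2) is a symmetry of the rank-2 distribution Δ = span{D, ∂_{z₂}} on ℝ⁵(x,y,z,z₁,z₂), where D = ∂ₓ + z₁∂_z + z₂∂_{z₁} + z₂^m ∂_y; i.e., the Lie brackets [W₇, D] and [W₇, ∂_{z₂}] lie in Δ at every point where z₂ > 0. -/

import Mathlib

/-! `W₇` commutes with `D`, and `[W₇, ∂_{z₂}] = -∂W₇/∂z₂ = (1 - m) z₂^{m-2} D`. In the `∂_y`-component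
this is where the coefficient `(m - 1)/(2m - 1)` comes from: the `z₂`-derivative of
`((m - 1)/(2m - 1)) z₂^{2m-1}` is `(m - 1) z₂^{m-2} · z₂^m`. -/

/-- The Lie bracket `[V,W](x) = DW(x)·V(x) − DV(x)·W(x)` of vector fields on `ℝ⁵`. -/
noncomputable def vBracket (V W : (Fin 5 → ℝ) → (Fin 5 → ℝ)) (x : Fin 5 → ℝ) : Fin 5 → ℝ :=
  fderiv ℝ W x (V x) - fderiv ℝ V x (W x)

/-- The total derivative field `D = ∂ₓ + z₁∂_z + z₂∂_{z₁} + z₂^m ∂_y` encoding the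
Monge equation `y' = (z'')^m` on `ℝ⁵(x,y,z,z₁,z₂)` (coordinates indexed `0,…,4`). -/
noncomputable def mongeD (m : ℝ) (p : Fin 5 → ℝ) : Fin 5 → ℝ :=
  ![1, (p 4) ^ m, p 3, p 4, 0]

/-- The vector field
`W₇ = z₂^{m−1}∂ₓ + ((m−1)/(2m−1))z₂^{2m−1}∂_y + (z₁z₂^{m−1} − y/m)∂_z + (1−1/m)z₂^m ∂_{z₁}`. -/
noncomputable def mongeW7 (m : ℝ) (p : Fin 5 → ℝ) : Fin 5 → ℝ :=
  ![(p 4) ^ (m - 1),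
    ((m - 1) / (2*m - 1)) * (p 4) ^ (2*m - 1),
    p 3 * (p 4) ^ (m - 1) - p 1 / m,
    (1 - 1/m) * (p 4) ^ m,
    0]

open ContinuousLinearMap

theorem vBracket_eq_of_hasFDerivAt {V W : (Fin 5 → ℝ) → Fin 5 → ℝ}
    {V' W' : (Fin 5 → ℝ) →L[ℝ] Fin 5 → ℝ} {x : Fin 5 → ℝ}
    (hV : HasFDerivAt V V' x) (hW : HasFDerivAt W W' x) :
    vBracket V W x = W' (V x) - V' (W x) := by
  rw [vBracket, hV.fderiv, hW.fderiv]

theorem vBracket_const_right {V : (Fin 5 → ℝ) → Fin 5 → ℝ} {V' : (Fin 5 → ℝ) →L[ℝ] Fin 5 → ℝ}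
    {x : Fin 5 → ℝ} (hV : HasFDerivAt V V' x) (c : Fin 5 → ℝ) :
    vBracket V (fun _ => c) x = -V' c := by
  rw [vBracket_eq_of_hasFDerivAt hV (hasFDerivAt_const c x), zero_apply, zero_sub]

section

variable {m : ℝ} {p : Fin 5 → ℝ}

theorem hasFDerivAt_mongeD (hp : p 4 ≠ 0) :
    HasFDerivAt (mongeD m)
      (pi (![0, (m * p 4 ^ (m - 1)) • proj 4, proj 3, proj 4, 0] :
        Fin 5 → (Fin 5 → ℝ) →L[ℝ] ℝ)) p := by
  rw [hasFDerivAt_pi']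
  intro i
  fin_cases i
  · exact hasFDerivAt_const _ _
  · exact (hasFDerivAt_apply 4 p).rpow_const (Or.inl hp)
  · exact hasFDerivAt_apply 3 p
  · exact hasFDerivAt_apply 4 p
  · exact hasFDerivAt_const _ _

theorem hasFDerivAt_mongeW7 (h0 : m ≠ 0) (h12 : 2 * m - 1 ≠ 0) (hp : p 4 ≠ 0) :
    HasFDerivAt (mongeW7 m)
      (pi (![((m - 1) * p 4 ^ (m - 2)) • proj 4,
        ((m - 1) * p 4 ^ (2 * m - 2)) • proj 4,
        (p 3 * (m - 1) * p 4 ^ (m - 2)) • proj 4 + p 4 ^ (m - 1) • proj 3 - m⁻¹ • proj 1,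
        ((m - 1) * p 4 ^ (m - 1)) • proj 4,
        0] : Fin 5 → (Fin 5 → ℝ) →L[ℝ] ℝ)) p := by
  have hz₂ (r : ℝ) :
      HasFDerivAt (fun x : Fin 5 → ℝ => x 4 ^ r) ((r * p 4 ^ (r - 1)) • proj (4 : Fin 5)) p :=
    (hasFDerivAt_apply 4 p).rpow_const (Or.inl hp)
  rw [hasFDerivAt_pi']
  intro i
  fin_cases i <;>
    simp only [mongeW7, proj_pi, Fin.zero_eta, Fin.mk_one, Fin.reduceFinMk, Matrix.cons_val]
  · exact (hz₂ _).congr_fderiv (by ext v; simp [sub_sub, one_add_one_eq_two])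
  · exact ((hz₂ _).const_mul _).congr_fderiv (by
      ext v
      simp only [sub_sub, one_add_one_eq_two, smul_apply, proj_apply, smul_eq_mul]
      grind)
  · simp only [div_eq_mul_inv]
    refine (((hasFDerivAt_apply 3 p).mul (hz₂ _)).sub
      ((hasFDerivAt_apply 1 p).mul_const m⁻¹)).congr_fderiv ?_
    ext v
    simp only [sub_sub, one_add_one_eq_two, sub_apply, add_apply, smul_apply, proj_apply, smul_eq_mul]
    ring
  · exact ((hz₂ _).const_mul _).congr_fderiv (by
      ext v
      simp only [smul_apply, proj_apply, smul_eq_mul]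
      field_simp)
  · exact hasFDerivAt_const _ _

theorem vBracket_mongeW7_mongeD (h0 : m ≠ 0) (h12 : 2 * m - 1 ≠ 0) (hp : p 4 ≠ 0) :
    vBracket (mongeW7 m) (mongeD m) p = 0 := by
  have hpow_succ : p 4 ^ (m - 1) * p 4 = p 4 ^ m := by
    rw [← Real.rpow_add_one hp, sub_add_cancel]
  rw [vBracket_eq_of_hasFDerivAt (hasFDerivAt_mongeW7 h0 h12 hp) (hasFDerivAt_mongeD hp)]
  ext i
  fin_cases i <;>
    simp only [Fin.isValue, mongeW7, one_div, coe_pi', mongeD, Fin.zero_eta, Fin.mk_one,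
      Fin.reduceFinMk, Pi.sub_apply, Matrix.cons_val_zero, Matrix.cons_val_one, Matrix.cons_val,
      zero_apply, smul_apply, proj_apply, sub_apply, add_apply, smul_eq_mul, mul_zero, zero_add,
      sub_self, Pi.zero_apply]
  linear_combination -hpow_succ

theorem vBracket_mongeW7_single (h0 : m ≠ 0) (h12 : 2 * m - 1 ≠ 0) (hp : 0 < p 4) :
    vBracket (mongeW7 m) (fun _ => Pi.single 4 1) p = ((1 - m) * p 4 ^ (m - 2)) • mongeD m p := by
  have hpow_add : p 4 ^ (m - 2) * p 4 ^ m = p 4 ^ (2 * m - 2) := by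
    rw [← Real.rpow_add hp]
    ring_nf
  have hpow_succ : p 4 ^ (m - 2) * p 4 = p 4 ^ (m - 1) := by
    rw [← Real.rpow_add_one hp.ne']
    ring_nf
  rw [vBracket_const_right (hasFDerivAt_mongeW7 h0 h12 hp.ne')]
  ext i
  fin_cases i <;>
    simp only [Fin.isValue, coe_pi', Fin.zero_eta, Fin.mk_one, Fin.reduceFinMk, Pi.neg_apply,
      Matrix.cons_val_zero, Matrix.cons_val_one, Matrix.cons_val, smul_apply, proj_apply, sub_apply,
      add_apply, zero_apply, Pi.single_eq_same, Pi.single_eq_of_ne, ne_eq, Fin.reduceEq,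
      not_false_eq_true, smul_eq_mul, mul_one, mul_zero, add_zero, sub_zero, neg_zero, mongeD,
      Pi.smul_apply]
  · ring
  · linear_combination (m - 1) * hpow_add
  · ring
  · linear_combination (m - 1) * hpow_succ

end

/-- For `m ≠ 0, 1/2`, the vector field `W₇` is an infinitesimal symmetry of the
rank 2 distribution `Δ = span{D, ∂_{z₂}}` on `ℝ⁵(x,y,z,z₁,z₂)` encoding the Monge
equation `y' = (z'')^m`: at every point with `z₂ > 0` the brackets `[W₇, D]` and
`[W₇, ∂_{z₂}]` lie in `Δ`. -/
theorem mongeW7_is_symmetry (m : ℝ) (h0 : m ≠ 0) (h12 : m ≠ 1/2)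
    (p : Fin 5 → ℝ) (hp : 0 < p 4) :
    vBracket (mongeW7 m) (mongeD m) p
        ∈ Submodule.span ℝ {mongeD m p, (Pi.single 4 1 : Fin 5 → ℝ)} ∧
    vBracket (mongeW7 m) (fun _ => (Pi.single 4 1 : Fin 5 → ℝ)) p
        ∈ Submodule.span ℝ {mongeD m p, (Pi.single 4 1 : Fin 5 → ℝ)} := by
  have h12' : 2 * m - 1 ≠ 0 := by
    contrapose! h12
    linarith
  constructor
  · rw [vBracket_mongeW7_mongeD h0 h12' hp.ne']
    exact zero_mem _
  · rw [vBracket_mongeW7_single h0 h12' hp]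
    exact Submodule.smul_mem _ _ (Submodule.subset_span (Set.mem_insert _ _))
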